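/- arXiv:2205.14224 — 4 statements merged into one kernel-verified Lean document; each statement's English description precedes it below -/
import Mathlib

section
/- Let g : ℝ^p × ℝ^q → ℝ be such that for every x, g(x,·) is μ-strongly convex, and suppose ∇g is L-Lipschitz jointly in (x,y). Let y*(x) denote the unique minimizer of g(x,·). Then y* is (L/μ)-Lipschitz: for all x₁, x₂, ‖y*(x₁) − y*(x₂)‖ ≤ (L/μ)‖x₁ − x₂‖. -/
open Set

lemma strong_min_aux {F : Type*} [NormedAddCommGroup F] [NormedSpace ℝ F]
    {f : F → ℝ} {μ : ℝ} (hsc : StrongConvexOn univ μ f) {a b : F}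
    (hmin : IsMinOn f univ a) : f a + μ / 2 * ‖a - b‖ ^ 2 ≤ f b := by
  have key : ∀ s : ℝ, s ∈ Ioc (0:ℝ) 1 →
      f a + (1 - s) * (μ / 2 * ‖a - b‖ ^ 2) ≤ f b := by
    rintro s ⟨hs0, hs1⟩
    have h := hsc.2 (mem_univ a) (mem_univ b) (by linarith : (0:ℝ) ≤ 1 - s)
      hs0.le (by ring)
    have hle : f a ≤ f ((1 - s) • a + s • b) := hmin (mem_univ _)
    have := hle.trans h
    simp only [smul_eq_mul] at this
    nlinarith [this, hs0]
  have htend : Filter.Tendsto (fun s : ℝ => f a + (1 - s) * (μ / 2 * ‖a - b‖ ^ 2))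
      (nhdsWithin 0 (Ioc (0:ℝ) 1)) (nhds (f a + μ / 2 * ‖a - b‖ ^ 2)) := by
    have : Filter.Tendsto (fun s : ℝ => f a + (1 - s) * (μ / 2 * ‖a - b‖ ^ 2))
        (nhds 0) (nhds (f a + (1 - 0) * (μ / 2 * ‖a - b‖ ^ 2))) := by
      exact ((continuous_const.add ((continuous_const.sub continuous_id).mul
        continuous_const)).tendsto 0)
    simpa using this.mono_left nhdsWithin_le_nhds
  have hne : (nhdsWithin (0:ℝ) (Ioc (0:ℝ) 1)).NeBot := by
    apply mem_closure_iff_nhdsWithin_neBot.mp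
    rw [closure_Ioc one_ne_zero.symm]
    norm_num
  exact le_of_tendsto htend (Filter.eventually_inf_principal.mpr (Filter.Eventually.of_forall key))

set_option maxHeartbeats 1000000 in
theorem minimizer_map_lipschitz {p q : ℕ}
    (g : WithLp 2 (EuclideanSpace ℝ (Fin p) × EuclideanSpace ℝ (Fin q)) → ℝ)
    (μ L : ℝ) (hμ : 0 < μ)
    (hcont : ContDiff ℝ 1 g)
    (hsc : ∀ x, StrongConvexOn univ μ
      (fun y => g ((WithLp.equiv 2 (EuclideanSpace ℝ (Fin p) × EuclideanSpace ℝ (Fin q))).symm (x, y))))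
    (hlip : ∀ z₁ z₂, ‖gradient g z₁ - gradient g z₂‖ ≤ L * ‖z₁ - z₂‖)
    (ystar : EuclideanSpace ℝ (Fin p) → EuclideanSpace ℝ (Fin q))
    (hmin : ∀ x, IsMinOn
      (fun y => g ((WithLp.equiv 2 (EuclideanSpace ℝ (Fin p) × EuclideanSpace ℝ (Fin q))).symm (x, y)))
      univ (ystar x)) :
    ∀ x₁ x₂, ‖ystar x₁ - ystar x₂‖ ≤ (L / μ) * ‖x₁ - x₂‖ := by
  intro x₁ x₂
  set Φ := WithLp.prodContinuousLinearEquiv 2 ℝ (EuclideanSpace ℝ (Fin p)) (EuclideanSpace ℝ (Fin q)) with hΦ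
  have hΦeq : ∀ (a : EuclideanSpace ℝ (Fin p)) (b : EuclideanSpace ℝ (Fin q)),
      (WithLp.equiv 2 (EuclideanSpace ℝ (Fin p) × EuclideanSpace ℝ (Fin q))).symm (a, b) = Φ.symm (a, b) :=
    fun a b => rfl
  have hnorm : ∀ (a : EuclideanSpace ℝ (Fin p)) (b : EuclideanSpace ℝ (Fin q)),
      ‖Φ.symm (a, b)‖ = Real.sqrt (‖a‖ ^ 2 + ‖b‖ ^ 2) := by
    intro a b
    rw [WithLp.prod_norm_eq_of_L2]
    rfl
  set y₁ := ystar x₁ with hy₁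
  set y₂ := ystar x₂ with hy₂
  -- strong convexity + minimality inequalities
  have h1 := strong_min_aux (hsc x₁) (b := y₂) (hmin x₁)
  have h2 := strong_min_aux (hsc x₂) (b := y₁) (hmin x₂)
  simp only [hΦeq, ← hy₁, ← hy₂] at h1 h2
  have hsum : μ * ‖y₁ - y₂‖ ^ 2 ≤
      (g (Φ.symm (x₁, y₂)) - g (Φ.symm (x₂, y₂)))
        - (g (Φ.symm (x₁, y₁)) - g (Φ.symm (x₂, y₁))) := by
    have e1 : ‖y₂ - y₁‖ = ‖y₁ - y₂‖ := norm_sub_rev _ _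
    rw [e1] at h2
    nlinarith [h1, h2]
  -- fderiv is Lipschitz
  have hDg : ∀ z₁ z₂, ‖fderiv ℝ g z₁ - fderiv ℝ g z₂‖ ≤ L * ‖z₁ - z₂‖ := by
    intro z₁ z₂
    have := hlip z₁ z₂
    rwa [gradient, gradient, ← map_sub, LinearIsometryEquiv.norm_map] at this
  have hL : 0 ≤ L * ‖x₁ - x₂‖ := by
    have h := (norm_nonneg _).trans (hDg (Φ.symm (x₁, 0)) (Φ.symm (x₂, 0)))
    calc (0:ℝ) ≤ L * ‖Φ.symm (x₁, 0) - Φ.symm (x₂, 0)‖ := h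
    _ = L * ‖x₁ - x₂‖ := by
        rw [← map_sub, Prod.mk_sub_mk, sub_self, hnorm]
        simp [Real.sqrt_sq (norm_nonneg _)]
  -- the derivative of the partial maps
  set B : EuclideanSpace ℝ (Fin q) →L[ℝ] WithLp 2 (EuclideanSpace ℝ (Fin p) × EuclideanSpace ℝ (Fin q)) :=
    Φ.symm.toContinuousLinearMap.comp
      (ContinuousLinearMap.inr ℝ _ _) with hB
  have hBnorm : ‖B‖ ≤ 1 := by
    refine ContinuousLinearMap.opNorm_le_bound _ zero_le_one (fun v => ?_)
    have hv : B v = Φ.symm (0, v) := rfl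
    rw [hv, hnorm]
    simp [Real.sqrt_sq (norm_nonneg _)]
  have hder : ∀ (x : EuclideanSpace ℝ (Fin p)) (y : EuclideanSpace ℝ (Fin q)),
      HasFDerivAt (fun y => g (Φ.symm (x, y)))
        ((fderiv ℝ g (Φ.symm (x, y))).comp B) y := by
    intro x y
    have hB' : HasFDerivAt (fun y : EuclideanSpace ℝ (Fin q) => Φ.symm (x, y)) B y := by
      have h := (Φ.symm.toContinuousLinearMap.hasFDerivAt
        (x := ((x, y) : EuclideanSpace ℝ (Fin p) × EuclideanSpace ℝ (Fin q)))).comp y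
        (hasFDerivAt_prodMk_right x y)
      exact h
    exact ((hcont.differentiable one_ne_zero _).hasFDerivAt).comp y hB'
  -- MVT bound on φ := g(x₁,·) - g(x₂,·)
  set φ : EuclideanSpace ℝ (Fin q) → ℝ := fun y => g (Φ.symm (x₁, y)) - g (Φ.symm (x₂, y)) with hφ
  have hmvt : ‖φ y₂ - φ y₁‖ ≤ (L * ‖x₁ - x₂‖) * ‖y₂ - y₁‖ := by
    refine convex_univ.norm_image_sub_le_of_norm_hasFDerivWithin_le
      (f' := fun y => (fderiv ℝ g (Φ.symm (x₁, y)) - fderiv ℝ g (Φ.symm (x₂, y))).comp B)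
      (fun y _ => ?_) (fun y _ => ?_) (mem_univ y₁) (mem_univ y₂)
    · have h := ((hder x₁ y).sub (hder x₂ y)).hasFDerivWithinAt (s := univ)
      rwa [← ContinuousLinearMap.sub_comp] at h
    · calc ‖(fderiv ℝ g (Φ.symm (x₁, y)) - fderiv ℝ g (Φ.symm (x₂, y))).comp B‖
          ≤ ‖fderiv ℝ g (Φ.symm (x₁, y)) - fderiv ℝ g (Φ.symm (x₂, y))‖ * ‖B‖ :=
            ContinuousLinearMap.opNorm_comp_le _ _
      _ ≤ (L * ‖Φ.symm (x₁, y) - Φ.symm (x₂, y)‖) * 1 :=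
            mul_le_mul (hDg _ _) hBnorm (norm_nonneg _) ((norm_nonneg _).trans (hDg _ _))
      _ = L * ‖x₁ - x₂‖ := by
            rw [mul_one, ← map_sub, Prod.mk_sub_mk, sub_self, hnorm]
            simp [Real.sqrt_sq (norm_nonneg _)]
  -- combine
  have hkey : μ * ‖y₁ - y₂‖ ^ 2 ≤ (L * ‖x₁ - x₂‖) * ‖y₁ - y₂‖ := by
    calc μ * ‖y₁ - y₂‖ ^ 2 ≤ φ y₂ - φ y₁ := hsum
    _ ≤ ‖φ y₂ - φ y₁‖ := le_abs_self _
    _ ≤ (L * ‖x₁ - x₂‖) * ‖y₂ - y₁‖ := hmvt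
    _ = (L * ‖x₁ - x₂‖) * ‖y₁ - y₂‖ := by rw [norm_sub_rev y₂ y₁]
  rcases eq_or_lt_of_le (norm_nonneg (y₁ - y₂)) with h0 | h0
  · rw [← h0, show (L / μ) * ‖x₁ - x₂‖ = (L * ‖x₁ - x₂‖) / μ by ring]
    exact div_nonneg hL hμ.le
  · set a := ‖y₁ - y₂‖ with ha
    set b := L * ‖x₁ - x₂‖ with hb
    have h' : μ * a ≤ b := by
      have h2 : (μ * a) * a ≤ b * a := by nlinarith [hkey]
      exact le_of_mul_le_mul_right h2 h0
    rw [show (L / μ) * ‖x₁ - x₂‖ = b / μ by rw [hb]; ring, le_div_iff₀ hμ]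
    linarith
end

section
/- Suppose f : ℝ^p × ℝ^q → ℝ has L-Lipschitz gradient, the map (x,y) ↦ ∇_x∇_y g(x,y) is ρ-Lipschitz and operator-norm-bounded by L, and ‖v*‖ ≤ M/μ. Then the AID hypergradient error satisfies ‖∇̂Φ − ∇Φ‖² ≤ (3L² + 3ρ²M²/μ²)‖y* − y^N‖² + 3L²‖v* − v^Q‖², where ∇Φ = ∇_x f(x,y*) − ∇_x∇_y g(x,y*) v* and ∇̂Φ = ∇_x f(x,y^N) − ∇_x∇_y g(x,y^N) v^Q. -/
lemma aux_aid (x na nb nc A B L2 X : ℝ)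
    (key : x ^ 2 ≤ (na + nb + nc) ^ 2)
    (h3 : (na + nb + nc) ^ 2 ≤ 3 * (na ^ 2 + nb ^ 2 + nc ^ 2))
    (ha2 : na ^ 2 ≤ L2 * A) (hb2 : nb ^ 2 ≤ X * A) (hc2 : nc ^ 2 ≤ L2 * B) :
    x ^ 2 ≤ (3 * L2 + 3 * X) * A + 3 * L2 * B := by nlinarith

theorem aid_hypergradient_error_decomposition {p q : ℕ} (L ρ M μ : ℝ)
    (hμ : 0 < μ) (hL : 0 ≤ L) (hρ : 0 ≤ ρ)
    (fx : EuclideanSpace ℝ (Fin q) → EuclideanSpace ℝ (Fin p))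
    (J : EuclideanSpace ℝ (Fin q) → (EuclideanSpace ℝ (Fin q) →L[ℝ] EuclideanSpace ℝ (Fin p)))
    (hfx : ∀ y₁ y₂, ‖fx y₁ - fx y₂‖ ≤ L * ‖y₁ - y₂‖)
    (hJlip : ∀ y₁ y₂, ‖J y₁ - J y₂‖ ≤ ρ * ‖y₁ - y₂‖)
    (hJbd : ∀ y, ‖J y‖ ≤ L)
    (ystar yN vstar vQ : EuclideanSpace ℝ (Fin q))
    (hv : ‖vstar‖ ≤ M / μ) :
    ‖(fx yN - J yN vQ) - (fx ystar - J ystar vstar)‖ ^ 2 ≤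
      (3 * L ^ 2 + 3 * ρ ^ 2 * M ^ 2 / μ ^ 2) * ‖ystar - yN‖ ^ 2
        + 3 * L ^ 2 * ‖vstar - vQ‖ ^ 2 := by
  set a := fx yN - fx ystar with ha'
  set b := (J ystar - J yN) vstar with hb'
  set c := J yN (vstar - vQ) with hc'
  have hdecomp : (fx yN - J yN vQ) - (fx ystar - J ystar vstar) = a + b + c := by
    simp only [ha', hb', hc', ContinuousLinearMap.sub_apply, map_sub]
    abel
  have ha : ‖a‖ ≤ L * ‖ystar - yN‖ := by
    rw [show ‖ystar - yN‖ = ‖yN - ystar‖ from norm_sub_rev _ _]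
    exact hfx yN ystar
  have hb : ‖b‖ ≤ ρ * ‖ystar - yN‖ * (M / μ) := by
    calc ‖b‖ ≤ ‖J ystar - J yN‖ * ‖vstar‖ := (J ystar - J yN).le_opNorm vstar
    _ ≤ (ρ * ‖ystar - yN‖) * (M / μ) :=
        mul_le_mul (hJlip ystar yN) hv (norm_nonneg _)
          (mul_nonneg hρ (norm_nonneg _))
  have hc : ‖c‖ ≤ L * ‖vstar - vQ‖ := by
    calc ‖c‖ ≤ ‖J yN‖ * ‖vstar - vQ‖ := (J yN).le_opNorm _
    _ ≤ L * ‖vstar - vQ‖ := mul_le_mul_of_nonneg_right (hJbd yN) (norm_nonneg _)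
  have htri : ‖a + b + c‖ ≤ ‖a‖ + ‖b‖ + ‖c‖ := norm_add₃_le
  have hMμ : 0 ≤ M / μ := le_trans (norm_nonneg _) hv
  rw [hdecomp]
  have hn : 0 ≤ ‖a + b + c‖ := norm_nonneg _
  have ha0 : 0 ≤ ‖a‖ := norm_nonneg _
  have hb0 : 0 ≤ ‖b‖ := norm_nonneg _
  have hc0 : 0 ≤ ‖c‖ := norm_nonneg _
  have hA0 : 0 ≤ ‖ystar - yN‖ := norm_nonneg _
  have hB0 : 0 ≤ ‖vstar - vQ‖ := norm_nonneg _
  have key : ‖a + b + c‖ ^ 2 ≤ (‖a‖ + ‖b‖ + ‖c‖) ^ 2 :=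
    pow_le_pow_left₀ hn htri 2
  have h3 : (‖a‖ + ‖b‖ + ‖c‖) ^ 2 ≤ 3 * (‖a‖^2 + ‖b‖^2 + ‖c‖^2) := by
    nlinarith [sq_nonneg (‖a‖ - ‖b‖), sq_nonneg (‖a‖ - ‖c‖), sq_nonneg (‖b‖ - ‖c‖)]
  have ha2 : ‖a‖^2 ≤ L^2 * ‖ystar - yN‖^2 := by
    simpa [mul_pow] using pow_le_pow_left₀ ha0 ha 2
  have hb2 : ‖b‖^2 ≤ ρ^2 * M^2 / μ^2 * ‖ystar - yN‖^2 := by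
    have := pow_le_pow_left₀ hb0 hb 2
    have hd : (ρ * ‖ystar - yN‖ * (M / μ))^2 = ρ^2 * M^2 / μ^2 * ‖ystar - yN‖^2 := by
      field_simp
    linarith [hd ▸ this]
  have hc2 : ‖c‖^2 ≤ L^2 * ‖vstar - vQ‖^2 := by
    simpa [mul_pow] using pow_le_pow_left₀ hc0 hc 2
  rw [show (3 * L ^ 2 + 3 * ρ ^ 2 * M ^ 2 / μ ^ 2)
      = 3 * L ^ 2 + 3 * (ρ ^ 2 * M ^ 2 / μ ^ 2) from by ring]
  exact aux_aid _ _ _ _ _ _ _ _ key h3 ha2 hb2 hc2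
end

section
/- Let (y^t) be inner GD iterates for a μ-strongly convex, L-smooth function g(x_k, ·) with 0 < α ≤ 1/L, initialized by warm start y_k^0 = y_{k-1}^N. If the minimizer map y*(x) is (L/μ)-Lipschitz, then for any λ > 0, ‖y_k^N − y*(x_k)‖² ≤ (1+λ)(1−αμ)^N ‖y_{k-1}^N − y*(x_{k-1})‖² + (1 + 1/λ)(1−αμ)^N (L²/μ²) ‖x_k − x_{k-1}‖². -/
open Set


local notation "⟪" x ", " y "⟫" => @inner ℝ _ _ x y

variable {E : Type*} [NormedAddCommGroup E] [InnerProductSpace ℝ E] [CompleteSpace E]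

lemma line_hasDerivAt (f : E → ℝ) (hf : Differentiable ℝ f) (x v : E) (t : ℝ) :
    HasDerivAt (fun s : ℝ => f (x + s • v)) ⟪gradient f (x + t • v), v⟫ t := by
  have h1 : HasDerivAt (fun s : ℝ => x + s • v) v t := by
    simpa using ((hasDerivAt_id t).smul_const v).const_add x
  have h2 : HasFDerivAt f ((InnerProductSpace.toDual ℝ E) (gradient f (x + t • v)))
      (x + t • v) := (hf _).hasGradientAt
  have h3 := h2.comp_hasDerivAt t h1
  rw [InnerProductSpace.toDual_apply_apply] at h3
  exact h3

lemma strong_convex_grad_ineq (f : E → ℝ) (μ : ℝ)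
    (hf : Differentiable ℝ f) (hsc : StrongConvexOn univ μ f) (y z : E) :
    f y + ⟪gradient f y, z - y⟫ + μ / 2 * ‖z - y‖ ^ 2 ≤ f z := by
  set v := z - y with hv
  have hd : HasDerivAt (fun s : ℝ => f (y + s • v)) ⟪gradient f y, v⟫ 0 := by
    simpa using line_hasDerivAt f hf y v 0
  have hslope : Filter.Tendsto (slope (fun s : ℝ => f (y + s • v)) 0) (nhdsWithin 0 (Ioi 0))
      (nhds ⟪gradient f y, v⟫) :=
    (hasDerivAt_iff_tendsto_slope.mp hd).mono_left
      (nhdsWithin_mono 0 (fun t ht => ne_of_gt ht))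
  have hB : Filter.Tendsto (fun t : ℝ => f z - f y - μ / 2 * (1 - t) * ‖y - z‖ ^ 2)
      (nhdsWithin 0 (Ioi 0)) (nhds (f z - f y - μ / 2 * ‖y - z‖ ^ 2)) := by
    have : Filter.Tendsto (fun t : ℝ => f z - f y - μ / 2 * (1 - t) * ‖y - z‖ ^ 2)
        (nhds 0) (nhds (f z - f y - μ / 2 * (1 - 0) * ‖y - z‖ ^ 2)) := by
      apply Continuous.tendsto; fun_prop
    simpa using this.mono_left nhdsWithin_le_nhds
  have hev : ∀ᶠ t in nhdsWithin 0 (Ioi 0),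
      slope (fun s : ℝ => f (y + s • v)) 0 t ≤
        f z - f y - μ / 2 * (1 - t) * ‖y - z‖ ^ 2 := by
    filter_upwards [Ioo_mem_nhdsGT_of_mem (by constructor <;> norm_num : (0:ℝ) ∈ Ico 0 1)]
      with t ht
    have ht0 : 0 < t := ht.1
    have ht1 : t < 1 := ht.2
    have hpt : y + t • v = (1 - t) • y + t • z := by
      rw [sub_smul, one_smul, smul_sub]; abel
    have hcv := hsc.2 (mem_univ y) (mem_univ z) (by linarith : (0:ℝ) ≤ 1 - t)
      ht0.le (by ring)
    rw [smul_eq_mul, smul_eq_mul] at hcv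
    rw [slope_def_field, hpt] at *
    simp only [zero_smul, add_zero, sub_zero]
    rw [div_le_iff₀ ht0]
    simp only at hcv
    nlinarith [hcv]
  have := le_of_tendsto_of_tendsto hslope hB hev
  have hnorm : ‖y - z‖ = ‖z - y‖ := norm_sub_rev y z
  rw [hnorm] at this
  linarith

lemma descent_lemma (f : E → ℝ) (L : ℝ) (hL : 0 ≤ L) (hf : Differentiable ℝ f)
    (hlip : ∀ y₁ y₂, ‖gradient f y₁ - gradient f y₂‖ ≤ L * ‖y₁ - y₂‖)
    (x v : E) :
    f (x + v) ≤ f x + ⟪gradient f x, v⟫ + L / 2 * ‖v‖ ^ 2 := by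
  set ψ : ℝ → ℝ := fun t =>
    f (x + t • v) - t * ⟪gradient f x, v⟫ - t ^ 2 * (L / 2 * ‖v‖ ^ 2) with hψdef
  have hψ : ∀ t : ℝ, HasDerivAt ψ
      (⟪gradient f (x + t • v), v⟫ - ⟪gradient f x, v⟫ - 2 * t * (L / 2 * ‖v‖ ^ 2)) t := by
    intro t
    have h1 := line_hasDerivAt f hf x v t
    have h2 : HasDerivAt (fun t : ℝ => t * ⟪gradient f x, v⟫) ⟪gradient f x, v⟫ t := by
      simpa using (hasDerivAt_id t).mul_const ⟪gradient f x, v⟫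
    have h3 : HasDerivAt (fun t : ℝ => t ^ 2 * (L / 2 * ‖v‖ ^ 2))
        (2 * t * (L / 2 * ‖v‖ ^ 2)) t := by
      simpa using (hasDerivAt_pow 2 t).mul_const (L / 2 * ‖v‖ ^ 2)
    exact (h1.sub h2).sub h3
  have hdiffψ : Differentiable ℝ ψ := fun t => (hψ t).differentiableAt
  have hanti : AntitoneOn ψ (Icc 0 1) := by
    apply antitoneOn_of_deriv_nonpos (convex_Icc 0 1) hdiffψ.continuous.continuousOn
      hdiffψ.differentiableOn
    intro t ht
    rw [interior_Icc] at ht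
    rw [(hψ t).deriv]
    have key : ⟪gradient f (x + t • v), v⟫ - ⟪gradient f x, v⟫ ≤ L * t * ‖v‖ ^ 2 := by
      have h1 : ⟪gradient f (x + t • v) - gradient f x, v⟫ ≤
          ‖gradient f (x + t • v) - gradient f x‖ * ‖v‖ := real_inner_le_norm _ _
      have h2 : ‖gradient f (x + t • v) - gradient f x‖ ≤ L * ‖t • v‖ := by
        simpa using hlip (x + t • v) x
      have h3 : ‖t • v‖ = t * ‖v‖ := by
        rw [norm_smul, Real.norm_eq_abs, abs_of_pos ht.1]
      rw [inner_sub_left] at h1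
      rw [h3] at h2
      nlinarith [mul_le_mul_of_nonneg_right h2 (norm_nonneg v)]
    nlinarith [key]
  have := hanti (left_mem_Icc.mpr zero_le_one) (right_mem_Icc.mpr zero_le_one) zero_le_one
  simp only [hψdef, zero_smul, add_zero, one_smul, zero_mul, one_pow, one_mul,
    sub_zero, zero_pow, ne_eq, OfNat.ofNat_ne_zero, not_false_eq_true] at this
  linarith

lemma gd_step_contract (f : E → ℝ) (μ L α : ℝ) (hμ : 0 < μ) (hμL : μ ≤ L)
    (hα : 0 < α) (hαL : α * L ≤ 1)
    (hf : Differentiable ℝ f) (hsc : StrongConvexOn univ μ f)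
    (hlip : ∀ y₁ y₂, ‖gradient f y₁ - gradient f y₂‖ ≤ L * ‖y₁ - y₂‖)
    (ys : E) (hmin : IsMinOn f univ ys) (yy : E) :
    ‖yy - α • gradient f yy - ys‖ ^ 2 ≤ (1 - α * μ) * ‖yy - ys‖ ^ 2 := by
  set G := gradient f yy with hG
  have hD : f ys ≤ f yy := hmin (mem_univ yy)
  -- strong convexity at yy, evaluated at ys
  have hsc1 := strong_convex_grad_ineq f μ hf hsc yy ys
  have hinner : ⟪G, ys - yy⟫ = -⟪G, yy - ys⟫ := by
    rw [← inner_neg_right, neg_sub]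
  rw [hinner] at hsc1
  -- descent lemma with v = -α • G
  have hdes := descent_lemma f L (by linarith) hf hlip yy (-(α • G))
  have hmin2 : f ys ≤ f (yy + -(α • G)) := hmin (mem_univ _)
  rw [inner_neg_right, real_inner_smul_right] at hdes
  have hnv : ‖-(α • G)‖ ^ 2 = α ^ 2 * ‖G‖ ^ 2 := by
    rw [norm_neg, norm_smul, Real.norm_eq_abs, abs_of_pos hα, mul_pow]
  rw [hnv] at hdes
  have hGG : ⟪G, G⟫ = ‖G‖ ^ 2 := real_inner_self_eq_norm_sq G
  rw [hGG] at hdes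
  -- expand the left side
  have hexp : ‖yy - α • G - ys‖ ^ 2 =
      ‖yy - ys‖ ^ 2 - 2 * α * ⟪yy - ys, G⟫ + α ^ 2 * ‖G‖ ^ 2 := by
    rw [sub_right_comm, norm_sub_sq_real, real_inner_smul_right, norm_smul,
      Real.norm_eq_abs, abs_of_pos hα, mul_pow]
    ring
  rw [hexp]
  have hsym : ⟪yy - ys, G⟫ = ⟪G, yy - ys⟫ := real_inner_comm _ _
  rw [hsym]
  have hS : (0:ℝ) ≤ ‖G‖ ^ 2 := sq_nonneg _
  have hR : (0:ℝ) ≤ ‖yy - ys‖ ^ 2 := sq_nonneg _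
  -- α^2 ‖G‖^2 ≤ 2 α (f yy - f ys)
  have hkey : α ^ 2 * ‖G‖ ^ 2 ≤ 2 * α * (f yy - f ys) := by
    nlinarith [mul_le_mul_of_nonneg_left hαL (mul_nonneg (mul_nonneg hα.le hα.le) hS)]
  rw [show ‖ys - yy‖ = ‖yy - ys‖ from norm_sub_rev _ _] at hsc1
  have hI : (f yy - f ys) + μ / 2 * ‖yy - ys‖ ^ 2 ≤ ⟪G, yy - ys⟫ := by linarith
  have h2α : (0:ℝ) ≤ 2 * α := by linarith
  nlinarith [mul_le_mul_of_nonneg_left hI h2α]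

lemma young_ineq (a b : E) (lam : ℝ) (hlam : 0 < lam) :
    ‖a + b‖ ^ 2 ≤ (1 + lam) * ‖a‖ ^ 2 + (1 + 1 / lam) * ‖b‖ ^ 2 := by
  have h := norm_add_sq_real a b
  have hcs := real_inner_le_norm a b
  have hl : lam * (1 / lam) = 1 := mul_one_div_cancel hlam.ne'
  nlinarith [sq_nonneg (lam * ‖a‖ - ‖b‖), norm_nonneg a, norm_nonneg b,
    mul_pos hlam (show (0:ℝ) < 1 / lam by positivity), sq_nonneg ‖a + b‖]

theorem warm_start_inner_error_recursion {p q : ℕ}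
    (g : EuclideanSpace ℝ (Fin p) → EuclideanSpace ℝ (Fin q) → ℝ)
    (μ L α : ℝ) (hμ : 0 < μ) (hμL : μ ≤ L) (hα : 0 < α) (hαL : α ≤ 1 / L)
    (hdiff : ∀ x, Differentiable ℝ (g x))
    (hsc : ∀ x, StrongConvexOn univ μ (g x))
    (hglip : ∀ x y₁ y₂, ‖gradient (g x) y₁ - gradient (g x) y₂‖ ≤ L * ‖y₁ - y₂‖)
    (ystar : EuclideanSpace ℝ (Fin p) → EuclideanSpace ℝ (Fin q))
    (hmin : ∀ x, IsMinOn (g x) univ (ystar x))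
    (hyslip : ∀ x₁ x₂, ‖ystar x₁ - ystar x₂‖ ≤ (L / μ) * ‖x₁ - x₂‖)
    (N : ℕ) (x : ℕ → EuclideanSpace ℝ (Fin p))
    (y : ℕ → ℕ → EuclideanSpace ℝ (Fin q))
    (hwarm : ∀ k : ℕ, y (k + 1) 0 = y k N)
    (hrec : ∀ k t : ℕ, y k (t + 1) = y k t - α • gradient (g (x k)) (y k t))
    (lam : ℝ) (hlam : 0 < lam) :
    ∀ k : ℕ, ‖y (k + 1) N - ystar (x (k + 1))‖ ^ 2 ≤
      (1 + lam) * (1 - α * μ) ^ N * ‖y k N - ystar (x k)‖ ^ 2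
        + (1 + 1 / lam) * (1 - α * μ) ^ N * (L ^ 2 / μ ^ 2) * ‖x (k + 1) - x k‖ ^ 2 := by
  intro k
  have hL : 0 < L := lt_of_lt_of_le hμ hμL
  have hαL' : α * L ≤ 1 := by
    rw [← le_div_iff₀ hL] at *; exact hαL
  have hfac : (0:ℝ) ≤ 1 - α * μ := by nlinarith
  set f := g (x (k + 1)) with hf
  set ys := ystar (x (k + 1)) with hys
  -- contraction over N steps
  have hiter : ∀ t : ℕ, ‖y (k + 1) t - ys‖ ^ 2 ≤ (1 - α * μ) ^ t * ‖y (k + 1) 0 - ys‖ ^ 2 := by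
    intro t
    induction t with
    | zero => simp
    | succ t ih =>
      have hstep := gd_step_contract f μ L α hμ hμL hα hαL' (hdiff _) (hsc _)
        (hglip _) ys (hmin _) (y (k + 1) t)
      rw [← hrec (k + 1) t] at hstep
      calc ‖y (k + 1) (t + 1) - ys‖ ^ 2 ≤ (1 - α * μ) * ‖y (k + 1) t - ys‖ ^ 2 := hstep
        _ ≤ (1 - α * μ) * ((1 - α * μ) ^ t * ‖y (k + 1) 0 - ys‖ ^ 2) := by
            exact mul_le_mul_of_nonneg_left ih hfac
        _ = (1 - α * μ) ^ (t + 1) * ‖y (k + 1) 0 - ys‖ ^ 2 := by ring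
  have hN := hiter N
  rw [hwarm k] at hN
  -- Young on the warm start
  have hde : y k N - ys = (y k N - ystar (x k)) + (ystar (x k) - ys) := by abel
  have hyoung := young_ineq (y k N - ystar (x k)) (ystar (x k) - ys) lam hlam
  rw [← hde] at hyoung
  -- Lipschitz minimizer bound
  have hlip2 : ‖ystar (x k) - ys‖ ^ 2 ≤ L ^ 2 / μ ^ 2 * ‖x (k + 1) - x k‖ ^ 2 := by
    have h1 := hyslip (x k) (x (k + 1))
    have h2 : ‖ystar (x k) - ys‖ ^ 2 ≤ ((L / μ) * ‖x k - x (k + 1)‖) ^ 2 := by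
      apply pow_le_pow_left₀ (norm_nonneg _) h1
    calc ‖ystar (x k) - ys‖ ^ 2 ≤ ((L / μ) * ‖x k - x (k + 1)‖) ^ 2 := h2
      _ = L ^ 2 / μ ^ 2 * ‖x (k + 1) - x k‖ ^ 2 := by
          rw [norm_sub_rev]; rw [mul_pow, div_pow]
  have hpow : (0:ℝ) ≤ (1 - α * μ) ^ N := pow_nonneg hfac N
  have h1lam : (0:ℝ) ≤ 1 + 1 / lam := by positivity
  calc ‖y (k + 1) N - ys‖ ^ 2 ≤ (1 - α * μ) ^ N * ‖y k N - ys‖ ^ 2 := hN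
    _ ≤ (1 - α * μ) ^ N * ((1 + lam) * ‖y k N - ystar (x k)‖ ^ 2
          + (1 + 1 / lam) * (L ^ 2 / μ ^ 2 * ‖x (k + 1) - x k‖ ^ 2)) := by
        apply mul_le_mul_of_nonneg_left _ hpow
        calc ‖y k N - ys‖ ^ 2 ≤ (1 + lam) * ‖y k N - ystar (x k)‖ ^ 2
              + (1 + 1 / lam) * ‖ystar (x k) - ys‖ ^ 2 := hyoung
          _ ≤ _ := by
              have := mul_le_mul_of_nonneg_left hlip2 h1lam
              linarith
    _ = (1 + lam) * (1 - α * μ) ^ N * ‖y k N - ystar (x k)‖ ^ 2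
        + (1 + 1 / lam) * (1 - α * μ) ^ N * (L ^ 2 / μ ^ 2) * ‖x (k + 1) - x k‖ ^ 2 := by
        ring
end

section
/- Let Φ be L_Φ-smooth and bounded below by Φ*, and suppose iterates x_{k+1} = x_k − β ∇̂Φ(x_k) satisfy the error bound ‖∇̂Φ(x_k) − ∇Φ(x_k)‖² ≤ A ρ^k + B β² ∑_{j=0}^{k-1} ρ^j ‖∇Φ(x_{k-1-j})‖² for all k, where 0 ≤ ρ < 1, A, B ≥ 0. If β ≤ 1/(4L_Φ) and B β²(1/2 + βL_Φ)/(1−ρ) ≤ 1/8, then (1/K) ∑_{k=0}^{K-1} ‖∇Φ(x_k)‖² ≤ 8(Φ(x_0) − Φ*)/(βK) + 8A/((1−ρ)K). -/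
open Finset
open scoped RealInnerProductSpace

private lemma geo_bound {ρ : ℝ} (h0 : 0 ≤ ρ) (h1 : ρ < 1) (n : ℕ) :
    ∑ i ∈ Finset.range n, ρ ^ i ≤ 1 / (1 - ρ) := by
  have h2 : (0:ℝ) < 1 - ρ := by linarith
  rw [geom_sum_eq (by intro h; rw [h] at h1; linarith) n]
  have h3 : (ρ ^ n - 1) / (ρ - 1) = (1 - ρ ^ n) / (1 - ρ) := by
    rw [← neg_div_neg_eq]; ring_nf
  rw [h3]
  have h4 : (0:ℝ) ≤ ρ ^ n := pow_nonneg h0 n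
  gcongr
  linarith

/-- Descent lemma: quadratic upper bound for functions with Lipschitz gradient. -/
private lemma descent_lemma_s19 {E : Type*} [NormedAddCommGroup E] [InnerProductSpace ℝ E]
    [CompleteSpace E] (Φ : E → ℝ) (L : ℝ) (hL : 0 ≤ L) (hdiff : Differentiable ℝ Φ)
    (hlip : ∀ x₁ x₂, ‖gradient Φ x₁ - gradient Φ x₂‖ ≤ L * ‖x₁ - x₂‖)
    (x d : E) : Φ (x + d) ≤ Φ x + ⟪gradient Φ x, d⟫ + L / 2 * ‖d‖ ^ 2 := by
  have hkey : ∀ t : ℝ, HasDerivAt (fun s : ℝ => Φ (x + s • d))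
      ⟪gradient Φ (x + t • d), d⟫ t := by
    intro t
    have h1 : HasDerivAt (fun s : ℝ => x + s • d) d t := by
      simpa using ((hasDerivAt_id t).smul_const d).const_add x
    have h2 : HasFDerivAt Φ
        ((InnerProductSpace.toDual ℝ E) (gradient Φ (x + t • d))) (x + t • d) :=
      hasGradientAt_iff_hasFDerivAt.mp (hdiff _).hasGradientAt
    have := h2.comp_hasDerivAt t h1
    simpa [Function.comp_def] using this
  set F : ℝ → ℝ := fun t => Φ (x + t • d) - t * ⟪gradient Φ x, d⟫
      - t ^ 2 * (L / 2 * ‖d‖ ^ 2) with hF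
  have hF' : ∀ t : ℝ, HasDerivAt F
      (⟪gradient Φ (x + t • d), d⟫ - ⟪gradient Φ x, d⟫ - t * (L * ‖d‖ ^ 2)) t := by
    intro t
    have hb : HasDerivAt (fun s : ℝ => s * ⟪gradient Φ x, d⟫) ⟪gradient Φ x, d⟫ t := by
      simpa using (hasDerivAt_id t).mul_const ⟪gradient Φ x, d⟫
    have hc : HasDerivAt (fun s : ℝ => s ^ 2 * (L / 2 * ‖d‖ ^ 2))
        ((2 * t) * (L / 2 * ‖d‖ ^ 2)) t := by
      simpa using (hasDerivAt_pow 2 t).mul_const (L / 2 * ‖d‖ ^ 2)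
    have := ((hkey t).sub hb).sub hc
    exact this.congr_deriv (by ring)
  have hanti : AntitoneOn F (Set.Icc (0:ℝ) 1) := by
    apply antitoneOn_of_deriv_nonpos (convex_Icc 0 1)
    · exact fun t _ => (hF' t).continuousAt.continuousWithinAt
    · exact fun t _ => (hF' t).differentiableAt.differentiableWithinAt
    · intro t ht
      rw [interior_Icc] at ht
      rw [(hF' t).deriv]
      have h5 : ⟪gradient Φ (x + t • d) - gradient Φ x, d⟫
          ≤ ‖gradient Φ (x + t • d) - gradient Φ x‖ * ‖d‖ := real_inner_le_norm _ _
      have h6 : ‖gradient Φ (x + t • d) - gradient Φ x‖ ≤ L * ‖t • d‖ := by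
        simpa using hlip (x + t • d) x
      have h7 : ‖t • d‖ = t * ‖d‖ := by
        rw [norm_smul, Real.norm_eq_abs, abs_of_pos ht.1]
      have h8 : ⟪gradient Φ (x + t • d), d⟫ - ⟪gradient Φ x, d⟫
          = ⟪gradient Φ (x + t • d) - gradient Φ x, d⟫ := (inner_sub_left _ _ _).symm
      rw [h7] at h6
      have h9 : L * (t * ‖d‖) * ‖d‖ = t * (L * ‖d‖ ^ 2) := by ring
      have h10 : ‖gradient Φ (x + t • d) - gradient Φ x‖ * ‖d‖ ≤ L * (t * ‖d‖) * ‖d‖ :=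
        mul_le_mul_of_nonneg_right h6 (norm_nonneg d)
      linarith [h8 ▸ h5]
  have h01 : F 1 ≤ F 0 := hanti (Set.mem_Icc.mpr ⟨le_refl 0, zero_le_one⟩)
    (Set.mem_Icc.mpr ⟨zero_le_one, le_refl 1⟩) zero_le_one
  simp only [hF, one_smul, zero_smul, add_zero, one_pow, one_mul, zero_mul, sub_zero,
    zero_pow, ne_eq, OfNat.ofNat_ne_zero, not_false_eq_true] at h01
  linarith

/-- Double-sum exchange bound. -/
private lemma sum_swap_bound (a : ℕ → ℝ) (ha : ∀ i, 0 ≤ a i) {ρ : ℝ}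
    (h0 : 0 ≤ ρ) (h1 : ρ < 1) (K : ℕ) :
    ∑ k ∈ Finset.range K, ∑ j ∈ Finset.range k, ρ ^ j * a (k - 1 - j)
      ≤ (1 / (1 - ρ)) * ∑ i ∈ Finset.range K, a i := by
  have hre : ∀ k, ∑ j ∈ Finset.range k, ρ ^ j * a (k - 1 - j)
      = ∑ i ∈ Finset.range k, ρ ^ (k - 1 - i) * a i := by
    intro k
    rw [← Finset.sum_range_reflect (fun i => ρ ^ (k - 1 - i) * a i) k]
    apply Finset.sum_congr rfl
    intro j hj
    rw [Finset.mem_range] at hj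
    have hjj : k - 1 - (k - 1 - j) = j := by omega
    rw [hjj]
  have hswap : ∑ k ∈ Finset.range K, ∑ j ∈ Finset.range k, ρ ^ j * a (k - 1 - j)
      = ∑ i ∈ Finset.range K, ∑ k ∈ Finset.Ico (i + 1) K, ρ ^ (k - 1 - i) * a i := by
    simp_rw [hre]
    simp only [Finset.range_eq_Ico]
    exact (Finset.sum_Ico_Ico_comm' 0 K (fun i k => ρ ^ (k - 1 - i) * a i)).symm
  rw [hswap]
  have h4 : ∀ i ∈ Finset.range K,
      ∑ k ∈ Finset.Ico (i + 1) K, ρ ^ (k - 1 - i) * a i ≤ (1 / (1 - ρ)) * a i := by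
    intro i _
    rw [← Finset.sum_mul]
    apply mul_le_mul_of_nonneg_right _ (ha i)
    rw [Finset.sum_Ico_eq_sum_range]
    have he : ∀ j : ℕ, (i + 1 + j) - 1 - i = j := fun j => by omega
    calc ∑ j ∈ Finset.range (K - (i + 1)), ρ ^ ((i + 1 + j) - 1 - i)
        = ∑ j ∈ Finset.range (K - (i + 1)), ρ ^ j := by
          apply Finset.sum_congr rfl; intro j _; rw [he j]
      _ ≤ 1 / (1 - ρ) := geo_bound h0 h1 _
  calc ∑ i ∈ Finset.range K, ∑ k ∈ Finset.Ico (i + 1) K, ρ ^ (k - 1 - i) * a i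
      ≤ ∑ i ∈ Finset.range K, (1 / (1 - ρ)) * a i := Finset.sum_le_sum h4
    _ = (1 / (1 - ρ)) * ∑ i ∈ Finset.range K, a i := by rw [Finset.mul_sum]

set_option maxHeartbeats 1000000 in
theorem approx_gd_convergence {p : ℕ}
    (Φ : EuclideanSpace ℝ (Fin p) → ℝ) (LΦ β Φstar A B ρ : ℝ)
    (hdiff : Differentiable ℝ Φ)
    (hlip : ∀ x₁ x₂, ‖gradient Φ x₁ - gradient Φ x₂‖ ≤ LΦ * ‖x₁ - x₂‖)
    (hbdd : ∀ x, Φstar ≤ Φ x)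
    (hβ : 0 < β) (hA : 0 ≤ A) (hB : 0 ≤ B) (hρ0 : 0 ≤ ρ) (hρ1 : ρ < 1)
    (x ghat : ℕ → EuclideanSpace ℝ (Fin p))
    (hx : ∀ k : ℕ, x (k + 1) = x k - β • ghat k)
    (herr : ∀ k : ℕ, ‖ghat k - gradient Φ (x k)‖ ^ 2 ≤
      A * ρ ^ k + B * β ^ 2 * ∑ j ∈ Finset.range k, ρ ^ j * ‖gradient Φ (x (k - 1 - j))‖ ^ 2)
    (hβ1 : β ≤ 1 / (4 * LΦ))
    (hβ2 : B * β ^ 2 * (1 / 2 + β * LΦ) / (1 - ρ) ≤ 1 / 8)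
    (K : ℕ) (hK : 0 < K) :
    (1 / K : ℝ) * ∑ k ∈ Finset.range K, ‖gradient Φ (x k)‖ ^ 2 ≤
      8 * (Φ (x 0) - Φstar) / (β * K) + 8 * A / ((1 - ρ) * K) := by
  have hρpos : (0:ℝ) < 1 - ρ := by linarith
  -- LΦ is positive
  have h4L : (0:ℝ) < 4 * LΦ := by
    by_contra h
    push_neg at h
    have h5 : 1 / (4 * LΦ) ≤ 0 := by
      rcases h.lt_or_eq with h' | h'
      · exact le_of_lt (div_neg_of_pos_of_neg one_pos h')
      · rw [h']; simp
    linarith [lt_of_lt_of_le hβ hβ1]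
  have hLpos : 0 < LΦ := by linarith
  have hβL : β * LΦ ≤ 1 / 4 := by
    have h6 : β * (4 * LΦ) ≤ 1 := (le_div_iff₀ h4L).mp hβ1
    calc β * LΦ = β * (4 * LΦ) / 4 := by ring
      _ ≤ 1 / 4 := by linarith
  -- per-step descent inequality
  have hstep : ∀ k : ℕ, Φ (x (k + 1)) ≤ Φ (x k)
      - β / 2 * ‖gradient Φ (x k)‖ ^ 2 + β / 2 * ‖ghat k - gradient Φ (x k)‖ ^ 2 := by
    intro k
    have hd := descent_lemma_s19 Φ LΦ hLpos.le hdiff hlip (x k) (-(β • ghat k))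
    rw [hx k, sub_eq_add_neg]
    set g := gradient Φ (x k) with hgdef
    set e := ghat k - g with hedef
    have hgh : ghat k = g + e := by rw [hedef]; abel
    have h1 : ⟪g, -(β • ghat k)⟫ = -(β * (‖g‖ ^ 2 + ⟪g, e⟫)) := by
      rw [hgh, inner_neg_right, real_inner_smul_right, inner_add_right,
        real_inner_self_eq_norm_sq]
    have h2 : ‖-(β • ghat k)‖ ^ 2 = β ^ 2 * (‖g‖ ^ 2 + 2 * ⟪g, e⟫ + ‖e‖ ^ 2) := by
      rw [hgh, norm_neg, norm_smul, mul_pow, Real.norm_eq_abs, sq_abs, norm_add_sq_real]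
    rw [h1, h2] at hd
    have habs : |⟪g, e⟫| ≤ ‖g‖ * ‖e‖ := abs_real_inner_le_norm g e
    have hge2 : ‖g‖ * ‖e‖ ≤ (‖g‖ ^ 2 + ‖e‖ ^ 2) / 2 := by
      nlinarith [sq_nonneg (‖g‖ - ‖e‖)]
    have hlow : -((‖g‖ ^ 2 + ‖e‖ ^ 2) / 2) ≤ ⟪g, e⟫ := by
      have := neg_abs_le ⟪g, e⟫; linarith
    have hcoef : 0 ≤ β - LΦ * β ^ 2 := by nlinarith
    nlinarith [mul_nonneg hcoef (by linarith : 0 ≤ (‖g‖ ^ 2 + ‖e‖ ^ 2) / 2 + ⟪g, e⟫)]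
  -- telescoping
  have htel : ∀ n : ℕ, Φ (x n) + β / 2 * ∑ k ∈ Finset.range n, ‖gradient Φ (x k)‖ ^ 2
      ≤ Φ (x 0) + β / 2 * ∑ k ∈ Finset.range n, ‖ghat k - gradient Φ (x k)‖ ^ 2 := by
    intro n
    induction n with
    | zero => simp
    | succ n ih =>
      rw [Finset.sum_range_succ, Finset.sum_range_succ]
      have h := hstep n
      linarith [h, ih]
  set S := ∑ k ∈ Finset.range K, ‖gradient Φ (x k)‖ ^ 2 with hSdef
  have hSnn : 0 ≤ S := Finset.sum_nonneg fun i _ => sq_nonneg _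
  -- error sum bound
  have hEbound : ∑ k ∈ Finset.range K, ‖ghat k - gradient Φ (x k)‖ ^ 2
      ≤ A / (1 - ρ) + B * β ^ 2 / (1 - ρ) * S := by
    have h1 : ∑ k ∈ Finset.range K, ‖ghat k - gradient Φ (x k)‖ ^ 2
        ≤ ∑ k ∈ Finset.range K, (A * ρ ^ k
          + B * β ^ 2 * ∑ j ∈ Finset.range k, ρ ^ j * ‖gradient Φ (x (k - 1 - j))‖ ^ 2) :=
      Finset.sum_le_sum fun k _ => herr k
    have h2 : ∑ k ∈ Finset.range K, A * ρ ^ k ≤ A / (1 - ρ) := by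
      rw [← Finset.mul_sum]
      calc A * ∑ k ∈ Finset.range K, ρ ^ k ≤ A * (1 / (1 - ρ)) :=
            mul_le_mul_of_nonneg_left (geo_bound hρ0 hρ1 K) hA
        _ = A / (1 - ρ) := by ring
    have h3 : ∑ k ∈ Finset.range K, ∑ j ∈ Finset.range k,
          ρ ^ j * ‖gradient Φ (x (k - 1 - j))‖ ^ 2 ≤ (1 / (1 - ρ)) * S :=
      sum_swap_bound (fun i => ‖gradient Φ (x i)‖ ^ 2) (fun i => sq_nonneg _) hρ0 hρ1 K
    calc ∑ k ∈ Finset.range K, ‖ghat k - gradient Φ (x k)‖ ^ 2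
        ≤ ∑ k ∈ Finset.range K, (A * ρ ^ k
          + B * β ^ 2 * ∑ j ∈ Finset.range k, ρ ^ j * ‖gradient Φ (x (k - 1 - j))‖ ^ 2) := h1
      _ = (∑ k ∈ Finset.range K, A * ρ ^ k) + B * β ^ 2 * ∑ k ∈ Finset.range K,
            ∑ j ∈ Finset.range k, ρ ^ j * ‖gradient Φ (x (k - 1 - j))‖ ^ 2 := by
          rw [Finset.sum_add_distrib, Finset.mul_sum]
      _ ≤ A / (1 - ρ) + B * β ^ 2 * ((1 / (1 - ρ)) * S) := by
          have hBβ : (0:ℝ) ≤ B * β ^ 2 := by positivity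
          exact add_le_add h2 (mul_le_mul_of_nonneg_left h3 hBβ)
      _ = A / (1 - ρ) + B * β ^ 2 / (1 - ρ) * S := by ring
  -- coefficient bound
  have hBb : B * β ^ 2 / (1 - ρ) ≤ 1 / 4 := by
    have h6 : B * β ^ 2 * (1 / 2 + β * LΦ) ≤ 1 / 8 * (1 - ρ) := (div_le_iff₀ hρpos).mp hβ2
    have h7 : B * β ^ 2 * (1 / 2) ≤ B * β ^ 2 * (1 / 2 + β * LΦ) := by
      nlinarith [mul_nonneg (mul_nonneg hB (sq_nonneg β)) (mul_nonneg hβ.le hLpos.le)]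
    rw [div_le_iff₀ hρpos]
    linarith
  -- combine
  have hfinal : β / 2 * S ≤ Φ (x 0) - Φstar + β / 2 * (A / (1 - ρ)) + β / 8 * S := by
    have h5 := htel K
    have h6 := hbdd (x K)
    have h7 : β / 2 * ∑ k ∈ Finset.range K, ‖ghat k - gradient Φ (x k)‖ ^ 2
        ≤ β / 2 * (A / (1 - ρ)) + β / 8 * S := by
      have h8 := mul_le_mul_of_nonneg_left hEbound (by positivity : (0:ℝ) ≤ β / 2)
      have h9 : B * β ^ 2 / (1 - ρ) * S ≤ 1 / 4 * S :=
        mul_le_mul_of_nonneg_right hBb hSnn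
      nlinarith [h8, h9]
    linarith
  have hgap : 0 ≤ Φ (x 0) - Φstar := by linarith [hbdd (x 0)]
  have hArnn : 0 ≤ A / (1 - ρ) := by positivity
  have hmain : S ≤ 8 * (Φ (x 0) - Φstar) / β + 8 * A / (1 - ρ) := by
    have hq : (Φ (x 0) - Φstar) / β * β = Φ (x 0) - Φstar :=
      div_mul_cancel₀ _ (ne_of_gt hβ)
    have h3 : (3 / 8 * S) * β ≤ ((Φ (x 0) - Φstar) / β + 1 / 2 * (A / (1 - ρ))) * β := by
      nlinarith [hfinal, hq]
    have h4 : 3 / 8 * S ≤ (Φ (x 0) - Φstar) / β + 1 / 2 * (A / (1 - ρ)) :=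
      le_of_mul_le_mul_right h3 hβ
    have hqnn : 0 ≤ (Φ (x 0) - Φstar) / β := div_nonneg hgap hβ.le
    have he1 : 8 * (Φ (x 0) - Φstar) / β = 8 * ((Φ (x 0) - Φstar) / β) := by ring
    have he2 : 8 * A / (1 - ρ) = 8 * (A / (1 - ρ)) := by ring
    rw [he1, he2]
    linarith
  -- divide by K
  have hKpos : (0:ℝ) < K := by exact_mod_cast hK
  rw [one_div, inv_mul_eq_div, ← div_div, ← div_div, ← add_div]
  exact div_le_div_of_nonneg_right hmain hKpos.le
end
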